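/- With Ω = [[Ω₁, Γ],[Γ†, Ω₂]] and Ωc the restriction of Ω to the reconstructible part H₁c ⊕ H₂c, the spectral multiplicity of Ωc is at most min(2·rank(Γ), dim H₁c, dim H₂c). -/

import Mathlib

open ContinuousLinearMap MeasureTheory

/-- The orbit of a set `S` under an operator `Ω`: the smallest closed `Ω`-invariant
subspace containing `S`. -/
noncomputable def orbit {H : Type*} [NormedAddCommGroup H] [InnerProductSpace ℂ H]
    (Ω : H →L[ℂ] H) (S : Set H) : Submodule ℂ H :=
  sInf {K : Submodule ℂ H | S ⊆ K ∧ IsClosed (K : Set H) ∧ ∀ x ∈ K, Ω x ∈ K}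

variable {H₁ H₂ : Type*} [NormedAddCommGroup H₁] [InnerProductSpace ℂ H₁] [CompleteSpace H₁]
  [NormedAddCommGroup H₂] [InnerProductSpace ℂ H₂] [CompleteSpace H₂]

/-- Inclusion of `H₁` into the Hilbert space direct sum `H₁ ⊕ H₂`. -/
noncomputable def inl' : H₁ →L[ℂ] WithLp 2 (H₁ × H₂) :=
  (WithLp.prodContinuousLinearEquiv 2 ℂ H₁ H₂).symm.toContinuousLinearMap ∘L
    ContinuousLinearMap.inl ℂ H₁ H₂

/-- Inclusion of `H₂` into the Hilbert space direct sum `H₁ ⊕ H₂`. -/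
noncomputable def inr' : H₂ →L[ℂ] WithLp 2 (H₁ × H₂) :=
  (WithLp.prodContinuousLinearEquiv 2 ℂ H₁ H₂).symm.toContinuousLinearMap ∘L
    ContinuousLinearMap.inr ℂ H₁ H₂

/-- The block operator `[[Ω₁, Γ], [Γ†, Ω₂]]` on `H₁ ⊕ H₂`. -/
noncomputable def blockOp (Ω₁ : H₁ →L[ℂ] H₁) (Ω₂ : H₂ →L[ℂ] H₂) (Γ : H₂ →L[ℂ] H₁) :
    WithLp 2 (H₁ × H₂) →L[ℂ] WithLp 2 (H₁ × H₂) :=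
  (WithLp.prodContinuousLinearEquiv 2 ℂ H₁ H₂).symm.toContinuousLinearMap ∘L
    ((Ω₁ ∘L ContinuousLinearMap.fst ℂ H₁ H₂ + Γ ∘L ContinuousLinearMap.snd ℂ H₁ H₂).prod
      ((ContinuousLinearMap.adjoint Γ) ∘L ContinuousLinearMap.fst ℂ H₁ H₂ +
        Ω₂ ∘L ContinuousLinearMap.snd ℂ H₁ H₂)) ∘L
    (WithLp.prodContinuousLinearEquiv 2 ℂ H₁ H₂).toContinuousLinearMap

/-- `H₁` as a subspace of `H₁ ⊕ H₂`. -/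
noncomputable def sub1 : Submodule ℂ (WithLp 2 (H₁ × H₂)) := LinearMap.range ((inl' : H₁ →L[ℂ] WithLp 2 (H₁ × H₂)) : H₁ →ₗ[ℂ] WithLp 2 (H₁ × H₂))

/-- `H₂` as a subspace of `H₁ ⊕ H₂`. -/
noncomputable def sub2 : Submodule ℂ (WithLp 2 (H₁ × H₂)) := LinearMap.range ((inr' : H₂ →L[ℂ] WithLp 2 (H₁ × H₂)) : H₂ →ₗ[ℂ] WithLp 2 (H₁ × H₂))

universe u v

/-!
Inside `H₁ ⊕ H₂` write `P` for `H₁`, so that `Pᗮ = H₂`, `H₂c = O(P) ⊓ Pᗮ` and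
`H₁c = O(Pᗮ) ⊓ P`. Since `P ≤ O(P)`, a vector of `O(P)` minus its `P`-component lies in `H₂c`;
splitting a vector of `O(P) ⊓ O(Pᗮ)` along `P ⊕ Pᗮ` therefore gives `H₁c ⊕ H₂c = O(P) ⊓ O(Pᗮ)`.

Conversely, let `K` be closed, `Ω`-invariant and contain the off-diagonal parts `Γ y` and `Γ† x`
of `Ω`. Then `{z | π_{Pᗮ} z ∈ K}` is closed, `Ω`-invariant and contains `P`, hence contains
`O(P)`, and so `H₂c ≤ K`; symmetrically `H₁c ≤ K`. This gives three generating sets: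
* a Hamel basis `B` of `Ran Γ` together with `Γ† B`, of cardinality `≤ 2 rank Γ`: its orbit
  contains `Γ† H₁`, because `Γ†` vanishes on `(Ran Γ)ᗮ` and the orbit is closed;
* a Hamel basis of `H₂c`, since for self-adjoint `Ω` the orbit of `H₂c` contains every `Γ y`:
  if `h` is the projection of `y ∈ H₂` onto `O(P)`, then `h ∈ H₂c`, and `y - h` lies in the
  `Ω`-invariant space `O(P)ᗮ ≤ H₂`, so `Γ y = Γ h`, the `H₁`-component of `Ω h`;
* symmetrically a Hamel basis of `H₁c`.
-/

theorem Submodule.exists_span_set_card_eq_rank {K V : Type*} [DivisionRing K] [AddCommGroup V]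
    [Module K V] (N : Submodule K V) :
    ∃ s : Set V, Cardinal.mk s = Module.rank K N ∧ span K s = N := by
  rw [rank_eq_spanRank_of_free, spanRank_top]
  exact N.exists_span_set_card_eq_spanRank

theorem Submodule.eq_top_of_le_of_orthogonal_le {𝕜 E : Type*} [RCLike 𝕜] [NormedAddCommGroup E]
    [InnerProductSpace 𝕜 E] [CompleteSpace E] {K C : Submodule 𝕜 E} (hC : IsClosed (C : Set E))
    (hK : K ≤ C) (hK' : Kᗮ ≤ C) : C = ⊤ := by
  rw [← hC.submodule_topologicalClosure_eq, Submodule.topologicalClosure_eq_top_iff, eq_bot_iff]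
  calc Cᗮ ≤ Kᗮ ⊓ Kᗮᗮ := le_inf (Submodule.orthogonal_le hK) (Submodule.orthogonal_le hK')
    _ = ⊥ := Kᗮ.inf_orthogonal_eq_bot

theorem Cardinal.mk_image_union_image_le {α : Type u} {β : Type (max u v)} (f g : α → β)
    (s : Set α) :
    Cardinal.mk (f '' s ∪ g '' s : Set β) ≤ 2 * Cardinal.lift.{v} (Cardinal.mk s) := by
  have image_le (h : α → β) : Cardinal.mk (h '' s) ≤ Cardinal.lift.{v} (Cardinal.mk s) := by
    have := Cardinal.mk_image_le_lift (f := h) (s := s)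
    rwa [Cardinal.lift_id'.{u, v}, Cardinal.lift_umax] at this
  calc Cardinal.mk (f '' s ∪ g '' s : Set β) ≤ Cardinal.mk (f '' s) + Cardinal.mk (g '' s) :=
        Cardinal.mk_union_le _ _
    _ ≤ 2 * Cardinal.lift.{v} (Cardinal.mk s) := by
        rw [two_mul]
        exact add_le_add (image_le f) (image_le g)

theorem ContinuousLinearMap.range_adjoint_le {H₁ H₂ : Type*} [NormedAddCommGroup H₁]
    [InnerProductSpace ℂ H₁] [CompleteSpace H₁] [NormedAddCommGroup H₂] [InnerProductSpace ℂ H₂]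
    [CompleteSpace H₂] {Γ : H₂ →L[ℂ] H₁} {K : Submodule ℂ H₂} (hK : IsClosed (K : Set H₂))
    (h : LinearMap.range (Γ : H₂ →ₗ[ℂ] H₁) ≤ K.comap (adjoint Γ : H₁ →ₗ[ℂ] H₂)) :
    LinearMap.range (adjoint Γ : H₁ →ₗ[ℂ] H₂) ≤ K := by
  have hC : K.comap (adjoint Γ : H₁ →ₗ[ℂ] H₂) = ⊤ := by
    refine Submodule.eq_top_of_le_of_orthogonal_le (hK.preimage (adjoint Γ).continuous) h ?_
    rw [orthogonal_range]
    intro x (hx : adjoint Γ x = 0)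
    simp [hx]
  rintro _ ⟨x, rfl⟩
  exact (hC ▸ Submodule.mem_top : x ∈ K.comap (adjoint Γ : H₁ →ₗ[ℂ] H₂))

@[ext]
theorem WithLp.prod_ext {p : ENNReal} {α β : Type*} {z w : WithLp p (α × β)}
    (h₁ : z.fst = w.fst) (h₂ : z.snd = w.snd) : z = w :=
  (WithLp.ext_iff p).2 (Prod.ext h₁ h₂)

theorem IsSelfAdjoint.apply_mem_orthogonal {E : Type*} [NormedAddCommGroup E]
    [InnerProductSpace ℂ E] [CompleteSpace E] {T : E →L[ℂ] E} {K : Submodule ℂ E}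
    (hT : IsSelfAdjoint T) (hTK : ∀ x ∈ K, T x ∈ K) {w : E} (hw : w ∈ Kᗮ) : T w ∈ Kᗮ := by
  rw [Submodule.mem_orthogonal] at hw ⊢
  intro u hu
  exact (hT.isSymmetric u w).symm.trans (hw _ (hTK u hu))

section Orbit

variable {E : Type*} [NormedAddCommGroup E] [InnerProductSpace ℂ E] (T : E →L[ℂ] E)

theorem subset_orbit (S : Set E) : S ⊆ orbit T S :=
  fun _ hx => Submodule.mem_sInf.2 fun _ hK => hK.1 hx

theorem isClosed_orbit (S : Set E) : IsClosed (orbit T S : Set E) := by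
  rw [orbit, Submodule.coe_sInf]
  exact isClosed_biInter fun _ hK => hK.2.1

theorem apply_mem_orbit {S : Set E} {x : E} (hx : x ∈ orbit T S) : T x ∈ orbit T S :=
  Submodule.mem_sInf.2 fun K hK => hK.2.2 x (Submodule.mem_sInf.1 hx K hK)

theorem orbit_le {S : Set E} {K : Submodule ℂ E} (hS : S ⊆ K) (hK : IsClosed (K : Set E))
    (hTK : ∀ x ∈ K, T x ∈ K) : orbit T S ≤ K :=
  sInf_le ⟨hS, hK, hTK⟩

theorem orbit_le_orbit {S S' : Set E} (h : S ⊆ orbit T S') : orbit T S ≤ orbit T S' :=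
  orbit_le T h (isClosed_orbit T S') fun _ => apply_mem_orbit T

theorem orbit_le_orbit_inf_orbit {S S₁ S₂ : Set E} (h : S ⊆ orbit T S₁ ⊓ orbit T S₂) :
    orbit T S ≤ orbit T S₁ ⊓ orbit T S₂ :=
  le_inf (orbit_le_orbit T fun _ hx => (h hx).1) (orbit_le_orbit T fun _ hx => (h hx).2)

theorem orbit_span (S : Set E) : orbit T (Submodule.span ℂ S) = orbit T S :=
  le_antisymm (orbit_le_orbit T (Submodule.span_le.2 (subset_orbit T S)))
    (orbit_le_orbit T (Submodule.subset_span.trans (subset_orbit T _)))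

def SpectralMultiplicityLE (M : Submodule ℂ E) (κ : Cardinal) : Prop :=
  ∃ G : Set E, G ⊆ M ∧ orbit T G = M ∧ Cardinal.mk G ≤ κ

variable {T}

theorem SpectralMultiplicityLE.min {M : Submodule ℂ E} {a b : Cardinal}
    (ha : SpectralMultiplicityLE T M a) (hb : SpectralMultiplicityLE T M b) :
    SpectralMultiplicityLE T M (min a b) := by
  rcases min_choice a b with h | h <;> rwa [h]

theorem spectralMultiplicityLE_rank {N M : Submodule ℂ E} (hNM : N ≤ M) (hN : orbit T N = M) :
    SpectralMultiplicityLE T M (Module.rank ℂ N) := by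
  obtain ⟨s, hcard, hspan⟩ := N.exists_span_set_card_eq_rank
  refine ⟨s, ?_, ?_, hcard.le⟩
  · exact (hspan ▸ Submodule.subset_span).trans hNM
  · rw [← orbit_span, hspan, hN]

end Orbit

section CoupledPart

variable {E : Type*} [NormedAddCommGroup E] [InnerProductSpace ℂ E] (T : E →L[ℂ] E)

noncomputable def coupledPart (P : Submodule ℂ E) : Submodule ℂ E := orbit T P ⊓ Pᗮ

variable {T} (P : Submodule ℂ E) [P.HasOrthogonalProjection] {K : Submodule ℂ E}

theorem starProjection_orthogonal_mem_coupledPart {z : E} (hz : z ∈ orbit T P) :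
    Pᗮ.starProjection z ∈ coupledPart T P := by
  refine ⟨?_, Pᗮ.starProjection_apply_mem z⟩
  rw [Submodule.starProjection_orthogonal_val]
  exact sub_mem hz (subset_orbit T P (P.starProjection_apply_mem z))

theorem coupledPart_sup_coupledPart_orthogonal :
    coupledPart T P ⊔ coupledPart T Pᗮ = orbit T P ⊓ orbit T Pᗮ := by
  apply le_antisymm
  · refine sup_le (inf_le_inf_left _ (subset_orbit T _)) ?_
    rw [coupledPart, inf_comm, Submodule.orthogonal_orthogonal]
    exact inf_le_inf_right _ (subset_orbit T _)
  · rintro w ⟨hw, hw'⟩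
    rw [← Pᗮ.starProjection_add_starProjection_orthogonal w]
    exact add_mem (Submodule.mem_sup_left (starProjection_orthogonal_mem_coupledPart P hw))
      (Submodule.mem_sup_right (starProjection_orthogonal_mem_coupledPart Pᗮ hw'))

theorem starProjection_orthogonal_apply_mem_orbit_inf {p : E} (hp : p ∈ P) :
    Pᗮ.starProjection (T p) ∈ orbit T P ⊓ orbit T Pᗮ :=
  coupledPart_sup_coupledPart_orthogonal P ▸ Submodule.mem_sup_left
    (starProjection_orthogonal_mem_coupledPart P (apply_mem_orbit T (subset_orbit T P hp)))

theorem starProjection_apply_mem_orbit_inf {q : E} (hq : q ∈ Pᗮ) :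
    P.starProjection (T q) ∈ orbit T P ⊓ orbit T Pᗮ := by
  have h : Pᗮᗮ.starProjection (T q) = P.starProjection (T q) := by simp
  rw [← h, ← coupledPart_sup_coupledPart_orthogonal P]
  exact Submodule.mem_sup_right
    (starProjection_orthogonal_mem_coupledPart Pᗮ (apply_mem_orbit T (subset_orbit T Pᗮ hq)))

theorem coupledPart_le (hK : IsClosed (K : Set E)) (hTK : ∀ x ∈ K, T x ∈ K)
    (hP : ∀ p ∈ P, Pᗮ.starProjection (T p) ∈ K) (hP' : ∀ q ∈ Pᗮ, P.starProjection (T q) ∈ K) :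
    coupledPart T P ≤ K := by
  let V : Submodule ℂ E := K.comap (Pᗮ.starProjection : E →ₗ[ℂ] E)
  have hV : orbit T P ≤ V := by
    refine orbit_le T (fun p hp => ?_) (hK.preimage (Pᗮ.starProjection).continuous) ?_
    · have : Pᗮ.starProjection p = 0 :=
        Pᗮ.starProjection_apply_eq_zero_iff.2 (P.le_orthogonal_orthogonal hp)
      simp [V, this]
    · intro z (hz : Pᗮ.starProjection z ∈ K)
      set q := Pᗮ.starProjection z
      have hsplit : Pᗮ.starProjection (T z) =
          Pᗮ.starProjection (T (P.starProjection z)) + (T q - P.starProjection (T q)) := by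
        conv_lhs => rw [← P.starProjection_add_starProjection_orthogonal z]
        rw [map_add, map_add, Submodule.starProjection_orthogonal_val (T q)]
      show Pᗮ.starProjection (T z) ∈ K
      rw [hsplit]
      exact add_mem (hP _ (P.starProjection_apply_mem z))
        (sub_mem (hTK _ hz) (hP' _ (Pᗮ.starProjection_apply_mem z)))
  rintro x ⟨hxO, hxP⟩
  rw [← Pᗮ.starProjection_eq_self_iff.2 hxP]
  exact hV hxO

theorem orbit_inf_orbit_orthogonal_le (hK : IsClosed (K : Set E)) (hTK : ∀ x ∈ K, T x ∈ K)
    (hP : ∀ p ∈ P, Pᗮ.starProjection (T p) ∈ K) (hP' : ∀ q ∈ Pᗮ, P.starProjection (T q) ∈ K) :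
    orbit T P ⊓ orbit T Pᗮ ≤ K := by
  rw [← coupledPart_sup_coupledPart_orthogonal]
  refine sup_le (coupledPart_le P hK hTK hP hP') (coupledPart_le Pᗮ hK hTK ?_ ?_)
  · simpa using hP'
  · rwa [Submodule.orthogonal_orthogonal]

variable [CompleteSpace E]

theorem starProjection_apply_mem_orbit_coupledPart (hT : IsSelfAdjoint T) {q : E}
    (hq : q ∈ Pᗮ) :
    P.starProjection (T q) ∈ orbit T (coupledPart T P) := by
  let O := orbit T P
  have : CompleteSpace O := (isClosed_orbit T P).completeSpace_coe
  have hPO : Oᗮ ≤ Pᗮ := Submodule.orthogonal_le (subset_orbit T P)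
  set h := O.starProjection q
  have hw : q - h ∈ Oᗮ := O.sub_starProjection_mem_orthogonal q
  have hh : h ∈ coupledPart T P := by
    refine ⟨O.starProjection_apply_mem q, ?_⟩
    rw [← sub_sub_cancel q h]
    exact sub_mem hq (hPO hw)
  have hTh : P.starProjection (T q) = P.starProjection (T h) := by
    have : P.starProjection (T (q - h)) = 0 :=
      P.starProjection_apply_eq_zero_iff.2
        (hPO (hT.apply_mem_orthogonal (fun _ => apply_mem_orbit T) hw))
    rwa [map_sub, map_sub, sub_eq_zero] at this
  rw [hTh, eq_sub_of_add_eq (P.starProjection_add_starProjection_orthogonal (T h))]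
  exact sub_mem (apply_mem_orbit T (subset_orbit T _ hh))
    (subset_orbit T _ (starProjection_orthogonal_mem_coupledPart P (apply_mem_orbit T hh.1)))

theorem orbit_coupledPart (hT : IsSelfAdjoint T) :
    orbit T (coupledPart T P) = orbit T P ⊓ orbit T Pᗮ := by
  refine le_antisymm (orbit_le_orbit_inf_orbit T ?_) ?_
  · exact (le_sup_left.trans (coupledPart_sup_coupledPart_orthogonal P).le :
      coupledPart T P ≤ _)
  · refine orbit_inf_orbit_orthogonal_le P (isClosed_orbit T _) (fun _ => apply_mem_orbit T)
      (fun p hp => subset_orbit T _ (starProjection_orthogonal_mem_coupledPart P ?_))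
      (fun q hq => starProjection_apply_mem_orbit_coupledPart P hT hq)
    exact apply_mem_orbit T (subset_orbit T P hp)

theorem orbit_coupledPart_orthogonal (hT : IsSelfAdjoint T) :
    orbit T (coupledPart T Pᗮ) = orbit T P ⊓ orbit T Pᗮ := by
  rw [orbit_coupledPart Pᗮ hT, Submodule.orthogonal_orthogonal, inf_comm]

end CoupledPart

section DirectSum

variable {H₁ : Type u} {H₂ : Type v} [NormedAddCommGroup H₁] [InnerProductSpace ℂ H₁]
  [NormedAddCommGroup H₂] [InnerProductSpace ℂ H₂]

local notation "E" => WithLp 2 (H₁ × H₂)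

@[simp] theorem inl'_fst (x : H₁) : (inl' x : E).fst = x := rfl
@[simp] theorem inl'_snd (x : H₁) : (inl' x : E).snd = 0 := rfl
@[simp] theorem inr'_fst (y : H₂) : (inr' y : E).fst = 0 := rfl
@[simp] theorem inr'_snd (y : H₂) : (inr' y : E).snd = y := rfl

theorem mem_sub1 {z : E} : z ∈ (sub1 : Submodule ℂ E) ↔ z.snd = 0 :=
  ⟨by rintro ⟨x, rfl⟩; rfl, fun h => ⟨z.fst, by ext <;> simp [h]⟩⟩

theorem mem_sub2 {z : E} : z ∈ (sub2 : Submodule ℂ E) ↔ z.fst = 0 :=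
  ⟨by rintro ⟨x, rfl⟩; rfl, fun h => ⟨z.snd, by ext <;> simp [h]⟩⟩

theorem sub1_orthogonal : (sub1 : Submodule ℂ E)ᗮ = sub2 := by
  ext z
  rw [Submodule.mem_orthogonal, mem_sub2]
  refine ⟨fun h => ?_, fun h u hu => ?_⟩
  · simpa [WithLp.prod_inner_apply] using h (inl' z.fst) ⟨z.fst, rfl⟩
  · simp [WithLp.prod_inner_apply, h, mem_sub1.1 hu]

theorem isClosed_sub1 : IsClosed ((sub1 : Submodule ℂ E) : Set E) := by
  have : ((sub1 : Submodule ℂ E) : Set E) = {z | z.snd = 0} := Set.ext fun _ => mem_sub1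
  rw [this]
  exact isClosed_eq (WithLp.continuous_snd 2 H₁ H₂) continuous_const

theorem inl'_fst_add_inr'_snd (z : E) : inl' z.fst + inr' z.snd = z := by
  ext <;> simp

end DirectSum

section BlockOperator

variable {H₁ : Type u} {H₂ : Type v} [NormedAddCommGroup H₁] [InnerProductSpace ℂ H₁]
  [CompleteSpace H₁] [NormedAddCommGroup H₂] [InnerProductSpace ℂ H₂] [CompleteSpace H₂]

local notation "E" => WithLp 2 (H₁ × H₂)

instance : (sub1 : Submodule ℂ E).HasOrthogonalProjection :=
  have : CompleteSpace (sub1 : Submodule ℂ E) := isClosed_sub1.completeSpace_coe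
  inferInstance

theorem starProjection_sub1 (z : E) : (sub1 : Submodule ℂ E).starProjection z = inl' z.fst :=
  Submodule.eq_starProjection_of_mem_orthogonal' ⟨z.fst, rfl⟩
    (sub1_orthogonal (H₁ := H₁) (H₂ := H₂) ▸ ⟨z.snd, rfl⟩) (inl'_fst_add_inr'_snd z).symm

theorem starProjection_sub1_orthogonal (z : E) :
    (sub1 : Submodule ℂ E)ᗮ.starProjection z = inr' z.snd := by
  rw [Submodule.starProjection_orthogonal_val, starProjection_sub1, ← inl'_fst_add_inr'_snd z]
  simp

variable (Ω₁ : H₁ →L[ℂ] H₁) (Ω₂ : H₂ →L[ℂ] H₂) (Γ : H₂ →L[ℂ] H₁)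

@[simp] theorem blockOp_fst (z : E) : (blockOp Ω₁ Ω₂ Γ z).fst = Ω₁ z.fst + Γ z.snd := rfl
@[simp] theorem blockOp_snd (z : E) :
    (blockOp Ω₁ Ω₂ Γ z).snd = adjoint Γ z.fst + Ω₂ z.snd := rfl

theorem starProjection_sub1_blockOp_inr' (y : H₂) :
    (sub1 : Submodule ℂ E).starProjection (blockOp Ω₁ Ω₂ Γ (inr' y)) = inl' (Γ y) := by
  simp [starProjection_sub1]

theorem starProjection_sub1_orthogonal_blockOp_inl' (x : H₁) :
    (sub1 : Submodule ℂ E)ᗮ.starProjection (blockOp Ω₁ Ω₂ Γ (inl' x)) = inr' (adjoint Γ x) := by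
  rw [starProjection_sub1_orthogonal]
  simp

theorem isSelfAdjoint_blockOp {Ω₁ : H₁ →L[ℂ] H₁} {Ω₂ : H₂ →L[ℂ] H₂} (hΩ₁ : IsSelfAdjoint Ω₁)
    (hΩ₂ : IsSelfAdjoint Ω₂) : IsSelfAdjoint (blockOp Ω₁ Ω₂ Γ) := by
  refine ContinuousLinearMap.isSelfAdjoint_iff_isSymmetric.2 fun z w => ?_
  change inner ℂ (Ω₁ z.fst + Γ z.snd) w.fst + inner ℂ (adjoint Γ z.fst + Ω₂ z.snd) w.snd =
    inner ℂ z.fst (Ω₁ w.fst + Γ w.snd) + inner ℂ z.snd (adjoint Γ w.fst + Ω₂ w.snd)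
  have h₁ : inner ℂ (Ω₁ z.fst) w.fst = inner ℂ z.fst (Ω₁ w.fst) := hΩ₁.isSymmetric _ _
  have h₂ : inner ℂ (Ω₂ z.snd) w.snd = inner ℂ z.snd (Ω₂ w.snd) := hΩ₂.isSymmetric _ _
  simp only [inner_add_left, inner_add_right, adjoint_inner_left, adjoint_inner_right, h₁, h₂]
  ring

theorem orbit_sub1_inf_le {K : Submodule ℂ E} (hK : IsClosed (K : Set E))
    (hΩK : ∀ x ∈ K, blockOp Ω₁ Ω₂ Γ x ∈ K) (hΓ : ∀ y, inl' (Γ y) ∈ K)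
    (hΓ' : ∀ x, inr' (adjoint Γ x) ∈ K) :
    orbit (blockOp Ω₁ Ω₂ Γ) (sub1 : Submodule ℂ E) ⊓
      orbit (blockOp Ω₁ Ω₂ Γ) (sub1 : Submodule ℂ E)ᗮ ≤ K := by
  refine orbit_inf_orbit_orthogonal_le (sub1 : Submodule ℂ E) hK hΩK ?_ ?_
  · rintro _ ⟨x, rfl⟩
    rw [coe_coe, starProjection_sub1_orthogonal_blockOp_inl']
    exact hΓ' x
  · rw [sub1_orthogonal]
    rintro _ ⟨y, rfl⟩
    rw [coe_coe, starProjection_sub1_blockOp_inr']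
    exact hΓ y

theorem inl'_apply_mem_orbit_inf (y : H₂) :
    inl' (Γ y) ∈ orbit (blockOp Ω₁ Ω₂ Γ) (sub1 : Submodule ℂ E) ⊓
      orbit (blockOp Ω₁ Ω₂ Γ) (sub1 : Submodule ℂ E)ᗮ := by
  rw [← starProjection_sub1_blockOp_inr' Ω₁ Ω₂]
  refine starProjection_apply_mem_orbit_inf (sub1 : Submodule ℂ E) ?_
  rw [sub1_orthogonal]
  exact ⟨y, rfl⟩

theorem inr'_adjoint_apply_mem_orbit_inf (x : H₁) :
    inr' (adjoint Γ x) ∈ orbit (blockOp Ω₁ Ω₂ Γ) (sub1 : Submodule ℂ E) ⊓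
      orbit (blockOp Ω₁ Ω₂ Γ) (sub1 : Submodule ℂ E)ᗮ := by
  rw [← starProjection_sub1_orthogonal_blockOp_inl' Ω₁ Ω₂]
  exact starProjection_orthogonal_apply_mem_orbit_inf (sub1 : Submodule ℂ E) ⟨x, rfl⟩


theorem spectralMultiplicityLE_blockOp_two_mul_rank :
    SpectralMultiplicityLE (blockOp Ω₁ Ω₂ Γ)
      (orbit (blockOp Ω₁ Ω₂ Γ) (sub1 : Submodule ℂ E) ⊓
        orbit (blockOp Ω₁ Ω₂ Γ) (sub1 : Submodule ℂ E)ᗮ)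
      (2 * Cardinal.lift.{v} (Module.rank ℂ (LinearMap.range (Γ : H₂ →ₗ[ℂ] H₁)))) := by
  obtain ⟨B, hcard, hspan⟩ := (LinearMap.range (Γ : H₂ →ₗ[ℂ] H₁)).exists_span_set_card_eq_rank
  set G : Set E := inl' '' B ∪ (fun b => inr' (adjoint Γ b)) '' B
  set O := orbit (blockOp Ω₁ Ω₂ Γ) G
  have range_le {C : Submodule ℂ H₁} (h : B ⊆ C) : LinearMap.range (Γ : H₂ →ₗ[ℂ] H₁) ≤ C :=
    hspan ▸ Submodule.span_le.2 h
  have hΓ (y : H₂) : inl' (Γ y) ∈ O :=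
    range_le (C := O.comap (inl' : H₁ →L[ℂ] E).toLinearMap)
      (fun b hb => subset_orbit _ _ (Or.inl ⟨b, hb, rfl⟩)) ⟨y, rfl⟩
  have hΓ' (x : H₁) : inr' (adjoint Γ x) ∈ O :=
    range_adjoint_le (K := O.comap (inr' : H₂ →L[ℂ] E).toLinearMap)
      ((isClosed_orbit _ G).preimage inr'.continuous)
      (range_le fun b hb => subset_orbit _ _ (Or.inr ⟨b, hb, rfl⟩)) ⟨x, rfl⟩
  have hGM : G ⊆ orbit (blockOp Ω₁ Ω₂ Γ) (sub1 : Submodule ℂ E) ⊓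
      orbit (blockOp Ω₁ Ω₂ Γ) (sub1 : Submodule ℂ E)ᗮ := by
    rintro _ (⟨b, hb, rfl⟩ | ⟨b, -, rfl⟩)
    · obtain ⟨y, rfl⟩ := hspan ▸ Submodule.subset_span hb
      exact inl'_apply_mem_orbit_inf Ω₁ Ω₂ Γ y
    · exact inr'_adjoint_apply_mem_orbit_inf Ω₁ Ω₂ Γ b
  refine ⟨G, hGM, le_antisymm (orbit_le_orbit_inf_orbit _ hGM) ?_,
    hcard ▸ Cardinal.mk_image_union_image_le _ _ B⟩
  exact orbit_sub1_inf_le Ω₁ Ω₂ Γ (isClosed_orbit _ _) (fun _ => apply_mem_orbit _) hΓ hΓ'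

end BlockOperator

theorem multiplicity_coupled_part_general
    {H₁ : Type u} {H₂ : Type v} [NormedAddCommGroup H₁] [InnerProductSpace ℂ H₁]
    [CompleteSpace H₁] [NormedAddCommGroup H₂] [InnerProductSpace ℂ H₂] [CompleteSpace H₂]
    (Ω₁ : H₁ →L[ℂ] H₁) (Ω₂ : H₂ →L[ℂ] H₂) (Γ : H₂ →L[ℂ] H₁)
    (hΩ₁ : IsSelfAdjoint Ω₁) (hΩ₂ : IsSelfAdjoint Ω₂)
    (Ω : WithLp 2 (H₁ × H₂) →L[ℂ] WithLp 2 (H₁ × H₂)) (hΩ : Ω = blockOp Ω₁ Ω₂ Γ)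
    (H2c H1c : Submodule ℂ (WithLp 2 (H₁ × H₂)))
    (hH2c : H2c = orbit Ω (sub1 : Submodule ℂ (WithLp 2 (H₁ × H₂))) ⊓
      (sub1 : Submodule ℂ (WithLp 2 (H₁ × H₂)))ᗮ)
    (hH1c : H1c = orbit Ω (sub2 : Submodule ℂ (WithLp 2 (H₁ × H₂))) ⊓
      (sub2 : Submodule ℂ (WithLp 2 (H₁ × H₂)))ᗮ) :
    ∃ G : Set (WithLp 2 (H₁ × H₂)), G ⊆ (H1c ⊔ H2c : Submodule ℂ (WithLp 2 (H₁ × H₂))) ∧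
      orbit Ω G = H1c ⊔ H2c ∧
      Cardinal.mk G ≤
        min (2 * Cardinal.lift.{v} (Module.rank ℂ (LinearMap.range (Γ : H₂ →ₗ[ℂ] H₁))))
          (min (Module.rank ℂ H1c) (Module.rank ℂ H2c)) := by
  subst hΩ
  rw [← sub1_orthogonal] at hH1c
  have hM : H1c ⊔ H2c = orbit (blockOp Ω₁ Ω₂ Γ) (sub1 : Submodule ℂ (WithLp 2 (H₁ × H₂))) ⊓
      orbit (blockOp Ω₁ Ω₂ Γ) (sub1 : Submodule ℂ (WithLp 2 (H₁ × H₂)))ᗮ := by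
    rw [hH1c, hH2c, sup_comm]
    exact coupledPart_sup_coupledPart_orthogonal _
  have hΩ := isSelfAdjoint_blockOp Γ hΩ₁ hΩ₂
  have hH1c_orbit : orbit (blockOp Ω₁ Ω₂ Γ) H1c = H1c ⊔ H2c := by
    rw [hM, hH1c]
    exact orbit_coupledPart_orthogonal _ hΩ
  have hH2c_orbit : orbit (blockOp Ω₁ Ω₂ Γ) H2c = H1c ⊔ H2c := by
    rw [hM, hH2c]
    exact orbit_coupledPart _ hΩ
  have hcoupling := spectralMultiplicityLE_blockOp_two_mul_rank Ω₁ Ω₂ Γ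
  rw [← hM] at hcoupling
  exact hcoupling.min ((spectralMultiplicityLE_rank le_sup_left hH1c_orbit).min
    (spectralMultiplicityLE_rank le_sup_right hH2c_orbit))

/-- the spectral multiplicity of the restriction `Ωc` of `Ω` to the
reconstructible part `H₁c ⊕ H₂c` is at most `min(2 rank Γ, dim H₁c, dim H₂c)`:
there is a generating set `G ⊆ H₁c ⊕ H₂c` whose `Ω`-orbit is `H₁c ⊕ H₂c` and whose
cardinality is bounded by this minimum. -/
theorem multiplicity_coupled_part
    {H₁ : Type u} {H₂ : Type v} [NormedAddCommGroup H₁] [InnerProductSpace ℂ H₁]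
    [CompleteSpace H₁] [NormedAddCommGroup H₂] [InnerProductSpace ℂ H₂] [CompleteSpace H₂]
    (Ω₁ : H₁ →L[ℂ] H₁) (Ω₂ : H₂ →L[ℂ] H₂) (Γ : H₂ →L[ℂ] H₁)
    (hΩ₁ : IsSelfAdjoint Ω₁) (hΩ₂ : IsSelfAdjoint Ω₂)
    (hrank : FiniteDimensional ℂ (LinearMap.range (Γ : H₂ →ₗ[ℂ] H₁)))
    (Ω : WithLp 2 (H₁ × H₂) →L[ℂ] WithLp 2 (H₁ × H₂)) (hΩ : Ω = blockOp Ω₁ Ω₂ Γ)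
    (H2c H1c : Submodule ℂ (WithLp 2 (H₁ × H₂)))
    (hH2c : H2c = orbit Ω (sub1 : Submodule ℂ (WithLp 2 (H₁ × H₂))) ⊓
      (sub1 : Submodule ℂ (WithLp 2 (H₁ × H₂)))ᗮ)
    (hH1c : H1c = orbit Ω (sub2 : Submodule ℂ (WithLp 2 (H₁ × H₂))) ⊓
      (sub2 : Submodule ℂ (WithLp 2 (H₁ × H₂)))ᗮ) :
    ∃ G : Set (WithLp 2 (H₁ × H₂)), G ⊆ (H1c ⊔ H2c : Submodule ℂ (WithLp 2 (H₁ × H₂))) ∧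
      orbit Ω G = H1c ⊔ H2c ∧
      Cardinal.mk G ≤
        min (2 * Cardinal.lift.{v} (Module.rank ℂ (LinearMap.range (Γ : H₂ →ₗ[ℂ] H₁))))
          (min (Module.rank ℂ H1c) (Module.rank ℂ H2c)) :=
  multiplicity_coupled_part_general Ω₁ Ω₂ Γ hΩ₁ hΩ₂ Ω hΩ H2c H1c hH2c hH1c
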